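/- arXiv:2007.01033 — 2 statements merged into one kernel-verified Lean document; each statement's English description precedes it below -/
import Mathlib

section
/- Let T be a Set-functor that preserves weak pullbacks and let Λ be a set of standard unary fuzzy predicate liftings for T. Then the Wasserstein lifting W_Λ is a converse-preserving fuzzy lax extension of T: it satisfies (L0) W_Λ(R˘) = (W_Λ R)˘, (L1) monotonicity, (L2) W_Λ(R;S) ≤ W_Λ R ; W_Λ S, and (L3) W_Λ(gr f) ≤ gr(Tf) and W_Λ((gr f)˘) ≤ (gr Tf)˘. If additionally all λ ∈ Λ are nonexpansive, then W_Λ is nonexpansive: W_Λ Δ_{ε,A} ≤ Δ_{ε,TA} for all A and ε > 0. -/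
open unitInterval

noncomputable section

instance : Fact ((0:ℝ) ≤ 1) := ⟨zero_le_one⟩

/-- A fuzzy relation between `A` and `B` is a map `A × B → [0,1]`. -/
abbrev FRel (A B : Type) : Type := A → B → I

/-- Clamp a real number into the unit interval. -/
def clamp (x : ℝ) : I := Set.projIcc 0 1 zero_le_one x

/-- Composition of fuzzy relations: `(R;S)(a,c) = inf_b min(R(a,b) + S(b,c), 1)`. -/
def fcomp {A B C : Type} (R : FRel A B) (S : FRel B C) : FRel A C :=
  fun a c => ⨅ b : B, clamp ((R a b : ℝ) + (S b c : ℝ))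

/-- Converse of a fuzzy relation. -/
def fconv {A B : Type} (R : FRel A B) : FRel B A := fun b a => R a b

open scoped Classical in
/-- The `ε`-graph of a function. -/
def fgraphE {A B : Type} (ε : I) (f : A → B) : FRel A B :=
  fun a b => if f a = b then ε else 1

/-- The graph of a function. -/
def fgraph {A B : Type} (f : A → B) : FRel A B := fgraphE 0 f

/-- The `ε`-diagonal. -/
def fdiagE (ε : I) (A : Type) : FRel A A := fgraphE ε (id : A → A)

/-- The diagonal. -/
def fdiag (A : Type) : FRel A A := fgraph (id : A → A)

/-- A Set-functor. -/
structure SetFunctor where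
  obj : Type → Type
  map : {A B : Type} → (A → B) → obj A → obj B
  map_id : ∀ (A : Type), map (id : A → A) = id
  map_comp : ∀ {A B C : Type} (f : A → B) (g : B → C), map (g ∘ f) = map g ∘ map f

/-- A fuzzy lax extension of a Set-functor. -/
structure LaxExt (T : SetFunctor) where
  lift : {A B : Type} → FRel A B → FRel (T.obj A) (T.obj B)
  mono : ∀ {A B : Type} (R S : FRel A B), R ≤ S → lift R ≤ lift S
  lax_comp : ∀ {A B C : Type} (R : FRel A B) (S : FRel B C),
    lift (fcomp R S) ≤ fcomp (lift R) (lift S)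
  lax_graph : ∀ {A B : Type} (f : A → B), lift (fgraph f) ≤ fgraph (T.map f)
  lax_graph_conv : ∀ {A B : Type} (f : A → B),
    lift (fconv (fgraph f)) ≤ fconv (fgraph (T.map f))

end

/-- Truncated (Łukasiewicz) addition on the unit interval. -/
noncomputable def oplus (x y : I) : I := clamp ((x : ℝ) + (y : ℝ))

/-- A unary fuzzy predicate lifting for `T`. -/
structure PredLift1 (T : SetFunctor) where
  app : (X : Type) → (X → I) → T.obj X → I
  natural : ∀ {X Y : Type} (f : X → Y) (g : Y → I) (t : T.obj X),
    app X (g ∘ f) t = app Y g (T.map f t)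

/-- A unary predicate lifting is standard: monotone, subadditive, and zero-preserving. -/
def Standard1 (T : SetFunctor) (l : PredLift1 T) : Prop :=
  (∀ (X : Type) (f g : X → I), f ≤ g → ∀ t, l.app X f t ≤ l.app X g t) ∧
  (∀ (X : Type) (f g : X → I) (t : T.obj X),
    l.app X (fun x => oplus (f x) (g x)) t ≤ oplus (l.app X f t) (l.app X g t)) ∧
  (∀ (X : Type) (t : T.obj X), l.app X (fun _ => (0 : I)) t = 0)

/-- A unary predicate lifting is nonexpansive w.r.t. the supremum norm. -/
def Nonexp1 (T : SetFunctor) (l : PredLift1 T) : Prop :=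
  ∀ (X : Type) (f g : X → I) (t : T.obj X),
    |(l.app X f t : ℝ) - (l.app X g t : ℝ)| ≤ ⨆ x : X, |(f x : ℝ) - (g x : ℝ)|

/-- A weak pullback square in Set. -/
def IsWeakPullback {P X Y Z : Type} (p₁ : P → X) (p₂ : P → Y) (f : X → Z) (g : Y → Z) :
    Prop :=
  (∀ u, f (p₁ u) = g (p₂ u)) ∧ ∀ x y, f x = g y → ∃ u, p₁ u = x ∧ p₂ u = y

/-- `T` preserves weak pullbacks. -/
def PreservesWeakPullbacks (T : SetFunctor) : Prop :=
  ∀ (P X Y Z : Type) (p₁ : P → X) (p₂ : P → Y) (f : X → Z) (g : Y → Z),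
    IsWeakPullback p₁ p₂ f g →
      IsWeakPullback (T.map p₁) (T.map p₂) (T.map f) (T.map g)

/-- The Wasserstein lifting induced by a set `Λ` of unary predicate liftings; the infimum
ranges over the couplings of `t₁` and `t₂`. -/
noncomputable def wasserstein (T : SetFunctor) (Λ : Set (PredLift1 T))
    {A B : Type} (R : FRel A B) : FRel (T.obj A) (T.obj B) :=
  fun t₁ t₂ => ⨆ l : Λ,
    ⨅ t : {t : T.obj (A × B) // T.map Prod.fst t = t₁ ∧ T.map Prod.snd t = t₂},
      l.1.app (A × B) (fun p => R p.1 p.2) t.1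

/- ----------------- Auxiliary lemmas ----------------- -/

lemma coe_clamp (x : ℝ) : ((clamp x : I) : ℝ) = max 0 (min 1 x) := rfl

lemma clamp_val (x : I) : clamp (x:ℝ) = x := Set.projIcc_val zero_le_one x

lemma clamp_mono {x y : ℝ} (h : x ≤ y) : clamp x ≤ clamp y := Set.monotone_projIcc zero_le_one h

lemma le_clamp {x : I} {y : ℝ} (h : (x:ℝ) ≤ y) : x ≤ clamp y := by
  have := clamp_mono h; rwa [clamp_val] at this

lemma SetFunctor.map_map (T : SetFunctor) {A B C : Type} (f : A → B) (g : B → C)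
    (t : T.obj A) : T.map g (T.map f t) = T.map (g ∘ f) t :=
  (congrFun (T.map_comp f g) t).symm

/-- One inequality between the coupling infima for a relation and its converse. -/
lemma wasserstein_swap_le (T : SetFunctor) {A B : Type} (R : FRel A B)
    (l : PredLift1 T) (t₁ : T.obj A) (t₂ : T.obj B) :
    (⨅ t : {t : T.obj (B × A) // T.map Prod.fst t = t₂ ∧ T.map Prod.snd t = t₁},
        l.app (B × A) (fun p => R p.2 p.1) t.1) ≤
      ⨅ t : {t : T.obj (A × B) // T.map Prod.fst t = t₁ ∧ T.map Prod.snd t = t₂},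
        l.app (A × B) (fun p => R p.1 p.2) t.1 := by
  refine le_iInf fun v => ?_
  have h1 : T.map Prod.fst (T.map Prod.swap v.1) = t₂ := by
    rw [T.map_map]; exact v.2.2
  have h2 : T.map Prod.snd (T.map Prod.swap v.1) = t₁ := by
    rw [T.map_map]; exact v.2.1
  refine le_trans (iInf_le _ ⟨T.map Prod.swap v.1, h1, h2⟩) ?_
  have := l.natural (Prod.swap : A × B → B × A) (fun p => R p.2 p.1) v.1
  exact le_of_eq this.symm

/-- for a weak-pullback-preserving functor and standard unary predicate
liftings, the Wasserstein lifting is a converse-preserving fuzzy lax extension, which is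
nonexpansive if all liftings in `Λ` are nonexpansive. -/
theorem wasserstein_is_lax_extension (T : SetFunctor) (Λ : Set (PredLift1 T))
    (hwpb : PreservesWeakPullbacks T)
    (hstd : ∀ l ∈ Λ, Standard1 T l) :
    (∀ (A B : Type) (R : FRel A B),
      wasserstein T Λ (fconv R) = fconv (wasserstein T Λ R)) ∧
    (∀ (A B : Type) (R₁ R₂ : FRel A B), R₁ ≤ R₂ →
      wasserstein T Λ R₁ ≤ wasserstein T Λ R₂) ∧
    (∀ (A B C : Type) (R : FRel A B) (S : FRel B C),
      wasserstein T Λ (fcomp R S) ≤ fcomp (wasserstein T Λ R) (wasserstein T Λ S)) ∧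
    (∀ (A B : Type) (f : A → B),
      wasserstein T Λ (fgraph f) ≤ fgraph (T.map f) ∧
      wasserstein T Λ (fconv (fgraph f)) ≤ fconv (fgraph (T.map f))) ∧
    ((∀ l ∈ Λ, Nonexp1 T l) →
      ∀ (A : Type) (ε : I), 0 < ε →
        wasserstein T Λ (fdiagE ε A) ≤ fdiagE ε (T.obj A)) := by
  refine ⟨?_, ?_, ?_, ?_, ?_⟩
  · -- (L0) converse
    intro A B R
    funext t₂ t₁
    apply le_antisymm
    · exact iSup_mono fun l => wasserstein_swap_le T R l.1 t₁ t₂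
    · exact iSup_mono fun l => wasserstein_swap_le T (fconv R) l.1 t₂ t₁
  · -- (L1) monotone
    intro A B R₁ R₂ hR t₁ t₂
    refine iSup_mono fun l => iInf_mono fun t => ?_
    exact (hstd l.1 l.2).1 _ _ _ (fun p => hR p.1 p.2) t.1
  · -- (L2) lax composition
    intro A B C R S t₁ t₃
    refine le_iInf fun t₂ => ?_
    refine iSup_le fun l => ?_
    -- notation
    set a : {t : T.obj (A × B) // T.map Prod.fst t = t₁ ∧ T.map Prod.snd t = t₂} → I :=
      fun u => l.1.app (A × B) (fun p => R p.1 p.2) u.1 with ha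
    set b : {t : T.obj (B × C) // T.map Prod.fst t = t₂ ∧ T.map Prod.snd t = t₃} → I :=
      fun v => l.1.app (B × C) (fun p => S p.1 p.2) v.1 with hb
    have step : (⨅ t : {t : T.obj (A × C) //
          T.map Prod.fst t = t₁ ∧ T.map Prod.snd t = t₃},
        l.1.app (A × C) (fun p => fcomp R S p.1 p.2) t.1) ≤
        clamp (((⨅ u, a u : I) : ℝ) + ((⨅ v, b v : I) : ℝ)) := by
      rcases isEmpty_or_nonempty {t : T.obj (A × B) //
          T.map Prod.fst t = t₁ ∧ T.map Prod.snd t = t₂} with hE | hNE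
      · refine le_clamp ?_
        rw [iInf_of_empty a]
        have h1 : (((⊤:I)) : ℝ) = 1 := rfl
        rw [h1]
        have := ((⨅ v, b v : I)).2.1
        have hle : ((⨅ t : {t : T.obj (A × C) //
            T.map Prod.fst t = t₁ ∧ T.map Prod.snd t = t₃},
            l.1.app (A × C) (fun p => fcomp R S p.1 p.2) t.1 : I) : ℝ) ≤ 1 :=
          (⨅ t : {t : T.obj (A × C) //
            T.map Prod.fst t = t₁ ∧ T.map Prod.snd t = t₃},
            l.1.app (A × C) (fun p => fcomp R S p.1 p.2) t.1 : I).2.2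
        linarith
      rcases isEmpty_or_nonempty {t : T.obj (B × C) //
          T.map Prod.fst t = t₂ ∧ T.map Prod.snd t = t₃} with hE | hNE'
      · refine le_clamp ?_
        rw [iInf_of_empty b]
        have h1 : (((⊤:I)) : ℝ) = 1 := rfl
        rw [h1]
        have := ((⨅ u, a u : I)).2.1
        have hle : ((⨅ t : {t : T.obj (A × C) //
            T.map Prod.fst t = t₁ ∧ T.map Prod.snd t = t₃},
            l.1.app (A × C) (fun p => fcomp R S p.1 p.2) t.1 : I) : ℝ) ≤ 1 :=
          (⨅ t : {t : T.obj (A × C) //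
            T.map Prod.fst t = t₁ ∧ T.map Prod.snd t = t₃},
            l.1.app (A × C) (fun p => fcomp R S p.1 p.2) t.1 : I).2.2
        linarith
      -- both coupling sets nonempty
      refine le_clamp (le_of_forall_pos_le_add fun δ hδ => ?_)
      have hca : ((⨅ u, a u : I) : ℝ) = ⨅ u, (a u : ℝ) := Set.Icc.coe_iInf zero_le_one
      have hcb : ((⨅ v, b v : I) : ℝ) = ⨅ v, (b v : ℝ) := Set.Icc.coe_iInf zero_le_one
      obtain ⟨u, hu⟩ : ∃ u, (a u : ℝ) < ((⨅ u, a u : I) : ℝ) + δ/2 := by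
        rw [hca]; exact exists_lt_of_ciInf_lt (by rw [← hca] at *; linarith)
      obtain ⟨v, hv⟩ : ∃ v, (b v : ℝ) < ((⨅ v, b v : I) : ℝ) + δ/2 := by
        rw [hcb]; exact exists_lt_of_ciInf_lt (by rw [← hcb] at *; linarith)
      -- the weak pullback
      set p₁ : A × B × C → A × B := fun w => (w.1, w.2.1) with hp₁
      set p₂ : A × B × C → B × C := fun w => w.2 with hp₂
      have hwp : IsWeakPullback p₁ p₂ (Prod.snd : A × B → B) (Prod.fst : B × C → B) := by
        constructor
        · intro w; rfl
        · intro x y h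
          exact ⟨(x.1, y), Prod.ext rfl h.symm, rfl⟩
      have hTwp := hwpb _ _ _ _ p₁ p₂ Prod.snd Prod.fst hwp
      obtain ⟨w, hw1, hw2⟩ := hTwp.2 u.1 v.1 (by rw [u.2.2, v.2.1])
      set π : A × B × C → A × C := fun w => (w.1, w.2.2) with hπ
      have hm1 : T.map Prod.fst (T.map π w) = t₁ := by
        rw [T.map_map]
        have : (Prod.fst ∘ π : A × B × C → A) = Prod.fst ∘ p₁ := rfl
        rw [this, ← T.map_map, hw1, u.2.1]
      have hm2 : T.map Prod.snd (T.map π w) = t₃ := by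
        rw [T.map_map]
        have : (Prod.snd ∘ π : A × B × C → C) = Prod.snd ∘ p₂ := rfl
        rw [this, ← T.map_map, hw2, v.2.2]
      have key : l.1.app (A × C) (fun p => fcomp R S p.1 p.2) (T.map π w) ≤
          oplus (a u) (b v) := by
        rw [← l.1.natural π (fun p => fcomp R S p.1 p.2) w]
        have hptw : ((fun p : A × C => fcomp R S p.1 p.2) ∘ π) ≤
            fun z : A × B × C => oplus
              (((fun p : A × B => R p.1 p.2) ∘ p₁) z)
              (((fun p : B × C => S p.1 p.2) ∘ p₂) z) := by
          intro z
          exact iInf_le (fun b' => clamp ((R z.1 b' : ℝ) + (S b' z.2.2 : ℝ))) z.2.1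
        refine le_trans ((hstd l.1 l.2).1 _ _ _ hptw w) ?_
        refine le_trans ((hstd l.1 l.2).2.1 _ _ _ w) ?_
        rw [l.1.natural p₁ (fun p : A × B => R p.1 p.2) w,
            l.1.natural p₂ (fun p : B × C => S p.1 p.2) w, hw1, hw2]
      have hinf : (⨅ t : {t : T.obj (A × C) //
            T.map Prod.fst t = t₁ ∧ T.map Prod.snd t = t₃},
          l.1.app (A × C) (fun p => fcomp R S p.1 p.2) t.1) ≤ oplus (a u) (b v) :=
        le_trans (iInf_le _ ⟨T.map π w, hm1, hm2⟩) key
      have hco : ((oplus (a u) (b v) : I) : ℝ) ≤ (a u : ℝ) + (b v : ℝ) := by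
        rw [oplus, coe_clamp]
        have h0 : (0:ℝ) ≤ (a u : ℝ) + (b v : ℝ) := add_nonneg (a u).2.1 (b v).2.1
        rw [max_eq_right (le_min zero_le_one h0)]
        exact min_le_right _ _
      calc ((⨅ t : {t : T.obj (A × C) //
            T.map Prod.fst t = t₁ ∧ T.map Prod.snd t = t₃},
          l.1.app (A × C) (fun p => fcomp R S p.1 p.2) t.1 : I) : ℝ)
          ≤ ((oplus (a u) (b v) : I) : ℝ) := hinf
        _ ≤ (a u : ℝ) + (b v : ℝ) := hco
        _ ≤ (((⨅ u, a u : I) : ℝ) + δ/2) + (((⨅ v, b v : I) : ℝ) + δ/2) := by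
            linarith
        _ = ((⨅ u, a u : I) : ℝ) + ((⨅ v, b v : I) : ℝ) + δ := by ring
    refine le_trans step ?_
    refine clamp_mono ?_
    have h1 : ((⨅ u, a u : I) : ℝ) ≤ ((wasserstein T Λ R t₁ t₂ : I) : ℝ) :=
      le_iSup (fun l' : Λ => ⨅ u : {t : T.obj (A × B) //
        T.map Prod.fst t = t₁ ∧ T.map Prod.snd t = t₂},
        l'.1.app (A × B) (fun p => R p.1 p.2) u.1) l
    have h2 : ((⨅ v, b v : I) : ℝ) ≤ ((wasserstein T Λ S t₂ t₃ : I) : ℝ) :=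
      le_iSup (fun l' : Λ => ⨅ v : {t : T.obj (B × C) //
        T.map Prod.fst t = t₂ ∧ T.map Prod.snd t = t₃},
        l'.1.app (B × C) (fun p => S p.1 p.2) v.1) l
    linarith
  · -- (L3) graphs
    intro A B f
    constructor
    · intro t₁ t₂
      by_cases h : T.map f t₁ = t₂
      · refine iSup_le fun l => ?_
        have hm1 : T.map Prod.fst (T.map (fun a => (a, f a)) t₁) = t₁ := by
          rw [T.map_map]
          have : (Prod.fst ∘ (fun a : A => (a, f a)) : A → A) = id := rfl
          rw [this, T.map_id]; rfl
        have hm2 : T.map Prod.snd (T.map (fun a => (a, f a)) t₁) = t₂ := by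
          rw [T.map_map]
          have : (Prod.snd ∘ (fun a : A => (a, f a)) : A → B) = f := rfl
          rw [this, h]
        refine le_trans (iInf_le _ ⟨T.map (fun a => (a, f a)) t₁, hm1, hm2⟩) ?_
        rw [← l.1.natural (fun a => (a, f a)) (fun p => fgraph f p.1 p.2) t₁]
        have he : ((fun p : A × B => fgraph f p.1 p.2) ∘ (fun a : A => (a, f a))) =
            fun _ : A => (0 : I) := by
          funext a; simp [Function.comp, fgraph, fgraphE]
        rw [he, (hstd l.1 l.2).2.2 A t₁]
        simp [fgraph, fgraphE, h]
      · have : fgraph (T.map f) t₁ t₂ = 1 := by simp [fgraph, fgraphE, h]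
        rw [this]; exact le_one'
    · intro t₂ t₁
      by_cases h : T.map f t₁ = t₂
      · refine iSup_le fun l => ?_
        have hm1 : T.map Prod.fst (T.map (fun a => (f a, a)) t₁) = t₂ := by
          rw [T.map_map]
          have : (Prod.fst ∘ (fun a : A => (f a, a)) : A → B) = f := rfl
          rw [this, h]
        have hm2 : T.map Prod.snd (T.map (fun a => (f a, a)) t₁) = t₁ := by
          rw [T.map_map]
          have : (Prod.snd ∘ (fun a : A => (f a, a)) : A → A) = id := rfl
          rw [this, T.map_id]; rfl
        refine le_trans (iInf_le _ ⟨T.map (fun a => (f a, a)) t₁, hm1, hm2⟩) ?_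
        rw [← l.1.natural (fun a => (f a, a)) (fun p : B × A => fconv (fgraph f) p.1 p.2) t₁]
        have he : ((fun p : B × A => fconv (fgraph f) p.1 p.2) ∘ (fun a : A => (f a, a))) =
            fun _ : A => (0 : I) := by
          funext a; simp [Function.comp, fconv, fgraph, fgraphE]
        rw [he, (hstd l.1 l.2).2.2 A t₁]
        simp [fconv, fgraph, fgraphE, h]
      · have : fconv (fgraph (T.map f)) t₂ t₁ = 1 := by simp [fconv, fgraph, fgraphE, h]
        rw [this]; exact le_one'
  · -- nonexpansive
    intro hne A ε hε t₁ t₂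
    by_cases h : t₁ = t₂
    · subst h
      have hr : fdiagE ε (T.obj A) t₁ t₁ = ε := by simp [fdiagE, fgraphE]
      rw [hr]
      refine iSup_le fun l => ?_
      have hm1 : T.map Prod.fst (T.map (fun a : A => (a, a)) t₁) = t₁ := by
        rw [T.map_map]
        have : (Prod.fst ∘ (fun a : A => (a, a)) : A → A) = id := rfl
        rw [this, T.map_id]; rfl
      have hm2 : T.map Prod.snd (T.map (fun a : A => (a, a)) t₁) = t₁ := by
        rw [T.map_map]
        have : (Prod.snd ∘ (fun a : A => (a, a)) : A → A) = id := rfl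
        rw [this, T.map_id]; rfl
      refine le_trans (iInf_le _ ⟨T.map (fun a : A => (a, a)) t₁, hm1, hm2⟩) ?_
      rw [← l.1.natural (fun a : A => (a, a)) (fun p : A × A => fdiagE ε A p.1 p.2) t₁]
      have he : ((fun p : A × A => fdiagE ε A p.1 p.2) ∘ (fun a : A => (a, a))) =
          fun _ : A => ε := by
        funext a; simp [Function.comp, fdiagE, fgraphE]
      rw [he]
      rcases isEmpty_or_nonempty A with hA | hA
      · have : (fun _ : A => ε) = fun _ : A => (0 : I) := funext fun a => hA.elim a
        rw [this, (hstd l.1 l.2).2.2 A t₁]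
        exact nonneg'
      · have hn := hne l.1 l.2 A (fun _ => ε) (fun _ => (0 : I)) t₁
        rw [(hstd l.1 l.2).2.2 A t₁] at hn
        have hs : (⨆ _ : A, |(ε : ℝ) - ((0:I) : ℝ)|) = (ε : ℝ) := by
          rw [ciSup_const]
          simp [abs_of_nonneg ε.2.1]
        rw [hs] at hn
        have : (l.1.app A (fun _ => ε) t₁ : ℝ) ≤ (ε : ℝ) := by
          have h0 : ((0:I) : ℝ) = 0 := rfl
          rw [h0, sub_zero] at hn
          exact le_trans (le_abs_self _) hn
        exact Subtype.coe_le_coe.mp this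
    · have : fdiagE ε (T.obj A) t₁ t₂ = 1 := by simp [fdiagE, fgraphE, h]
      rw [this]; exact le_one'
end

section
/- Let L be a fuzzy lax extension of a Set-functor T and let σ : (−)^n ⇒ T be a natural transformation. Then the Moss lifting μ^σ, given by μ^σ_X(f₁,…,fₙ)(t) = L(∈_X)(t, σ_{QX}(f₁,…,fₙ)), is a monotone predicate lifting: for all f₁,…,fₙ, g₁,…,gₙ : X → [0,1] with fᵢ ≤ gᵢ pointwise for all i, and all t ∈ TX, μ^σ_X(f₁,…,fₙ)(t) ≤ μ^σ_X(g₁,…,gₙ)(t). -/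
open unitInterval

/-- The fuzzy elementhood relation `∈_X : X ×> (X → [0,1])`, `∈_X(x,f) = f(x)`. -/
def felem (X : Type) : FRel X (X → I) := fun x f => f x

/-- The Moss lifting `μ^sig_X(f₁,…,fₙ)(t) = L(∈_X)(t, sig_{QX}(f₁,…,fₙ))`. -/
noncomputable def mossLift (T : SetFunctor) (L : LaxExt T) {n : ℕ}
    (sig : (X : Type) → (Fin n → X) → T.obj X)
    (X : Type) (f : Fin n → (X → I)) (t : T.obj X) : I :=
  L.lift (felem X) t (sig (X → I) f)


lemma clamp_coe (x : I) : clamp (x : ℝ) = x := Set.projIcc_val _ _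

lemma clamp_mono_s18 : Monotone clamp := Set.monotone_projIcc zero_le_one

lemma le_clamp_add_left (a b : I) : a ≤ clamp ((a : ℝ) + (b : ℝ)) := by
  calc a = clamp (a : ℝ) := (clamp_coe a).symm
    _ ≤ clamp ((a : ℝ) + (b : ℝ)) := clamp_mono_s18 (le_add_of_nonneg_right b.2.1)

lemma clamp_eq_one {x : ℝ} (h : 1 ≤ x) : clamp x = 1 := Set.projIcc_of_right_le _ h

/-- the Moss lifting of a natural transformation `sig : (−)^n ⇒ T` is a monotone
predicate lifting. -/
theorem moss_lifting_monotone (T : SetFunctor) (L : LaxExt T) (n : ℕ)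
    (sig : (X : Type) → (Fin n → X) → T.obj X)
    (hsig : ∀ (X Y : Type) (f : X → Y) (v : Fin n → X),
      T.map f (sig X v) = sig Y (fun i => f (v i)))
    (X : Type) (f g : Fin n → (X → I)) (hfg : ∀ i, f i ≤ g i) (t : T.obj X) :
    mossLift T L sig X f t ≤ mossLift T L sig X g t := by
  classical
  set ω := sig (Fin n) (id : Fin n → Fin n) with hω
  have hfω : T.map f ω = sig (X → I) f := by rw [hsig]; rfl
  have hgω : T.map g ω = sig (X → I) g := by rw [hsig]; rfl
  -- the auxiliary relation W = (gr g)˘ ; gr f on Q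
  set W : FRel (X → I) (X → I) := fcomp (fconv (fgraph g)) (fgraph f) with hW
  -- Step A : ∈ ≤ ∈ ; W
  have hA : felem X ≤ fcomp (felem X) W := by
    intro x h
    refine le_iInf fun h' => ?_
    by_cases hc : ∃ i, g i = h' ∧ f i = h
    · obtain ⟨i, hgi, hfi⟩ := hc
      have h1 : h x ≤ h' x := by rw [← hgi, ← hfi]; exact hfg i x
      calc (felem X x h) = h x := rfl
        _ ≤ h' x := h1
        _ ≤ clamp ((h' x : ℝ) + (W h' h : ℝ)) := le_clamp_add_left _ _
    · have hW1 : (1 : I) ≤ W h' h := by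
        refine le_iInf fun i => ?_
        have : ¬ (g i = h' ∧ f i = h) := fun hh => hc ⟨i, hh⟩
        rcases Classical.em (g i = h') with hg1 | hg1
        · have hf1 : f i ≠ h := fun hh => this ⟨hg1, hh⟩
          have : fgraph f i h = 1 := by simp [fgraph, fgraphE, hf1]
          rw [this]
          refine le_of_eq (clamp_eq_one ?_).symm
          have h0 := (fconv (fgraph g) h' i).2.1
          have h1 : ((1:I):ℝ) = 1 := rfl
          linarith
        · have : fconv (fgraph g) h' i = 1 := by simp [fconv, fgraph, fgraphE, hg1]
          rw [this]
          refine le_of_eq (clamp_eq_one ?_).symm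
          have h0 := (fgraph f i h).2.1
          have h1 : ((1:I):ℝ) = 1 := rfl
          linarith
      have hterm : (1 : I) ≤ clamp ((h' x : ℝ) + (W h' h : ℝ)) := by
        refine le_of_eq (clamp_eq_one ?_).symm
        have h1 : ((1:I) : ℝ) ≤ (W h' h : ℝ) := hW1
        have h1' : ((1:I):ℝ) = 1 := rfl
        have h2 : (0 : ℝ) ≤ (h' x : ℝ) := (h' x).2.1
        linarith
      exact le_trans (le_one _) hterm
  -- Step B : L W ≤ (gr Tg)˘ ; gr Tf
  have hB : L.lift W ≤ fcomp (fconv (fgraph (T.map g))) (fgraph (T.map f)) := by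
    refine le_trans (L.lax_comp _ _) ?_
    intro u v
    refine iInf_mono fun s => ?_
    refine clamp_mono_s18 (add_le_add ?_ ?_)
    · exact_mod_cast L.lax_graph_conv g u s
    · exact_mod_cast L.lax_graph f s v
  -- Step C : L W (σ g) (σ f) = 0
  have hC : L.lift W (sig (X → I) g) (sig (X → I) f) = 0 := by
    apply le_antisymm
    · refine le_trans (hB _ _) ?_
      refine iInf_le_of_le ω ?_
      have h1 : fconv (fgraph (T.map g)) (sig (X → I) g) ω = 0 := by
        simp [fconv, fgraph, fgraphE, hgω]
      have h2 : fgraph (T.map f) ω (sig (X → I) f) = 0 := by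
        simp [fgraph, fgraphE, hfω]
      rw [h1, h2]
      refine le_of_eq ?_
      have : ((0 : I) : ℝ) + ((0 : I) : ℝ) = ((0 : I) : ℝ) := by norm_num
      rw [this, clamp_coe]
    · exact (L.lift W (sig (X → I) g) (sig (X → I) f)).2.1
  -- Step D : conclude
  calc mossLift T L sig X f t = L.lift (felem X) t (sig (X → I) f) := rfl
    _ ≤ L.lift (fcomp (felem X) W) t (sig (X → I) f) := L.mono _ _ hA t _
    _ ≤ fcomp (L.lift (felem X)) (L.lift W) t (sig (X → I) f) := L.lax_comp _ _ t _
    _ ≤ clamp ((L.lift (felem X) t (sig (X → I) g) : ℝ) + (L.lift W (sig (X → I) g) (sig (X → I) f) : ℝ)) :=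
        iInf_le _ _
    _ = L.lift (felem X) t (sig (X → I) g) := by
        rw [hC]
        have : ((L.lift (felem X) t (sig (X → I) g) : ℝ) + ((0:I) : ℝ))
            = (L.lift (felem X) t (sig (X → I) g) : ℝ) := by norm_num
        rw [this, clamp_coe]
    _ = mossLift T L sig X g t := rfl
end
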